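/- Let A = ι(a₁)⋯ι(a_r) and B = ι(b₁)⋯ι(b_s) be invertible blades in Cl(Q) such that the span of {a₁,…,a_r} is contained in the span of {b₁,…,b_s} (so that A·B = A ⌟ B). Then for every vector x ∈ M, P_B(P_A(ι x)) = P_A(ι x), where P_C(X) = (1/2)·(X - α(C)·X·C⁻¹). -/

import Mathlib

open CliffordAlgebra

/-- The inverse projection operator `P_A(X) = (1/2)·(X - α(A)·X·A⁻¹)` for invertible `A`. -/
noncomputable def invProj {K M : Type*} [Field K] [Invertible (2 : K)]
    [AddCommGroup M] [Module K M] {Q : QuadraticForm K M}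
    (A : CliffordAlgebra Q) [Invertible A] (X : CliffordAlgebra Q) : CliffordAlgebra Q :=
  ⅟(2 : K) • (X - involute A * X * ⅟A)

/-!
Twisted conjugation by a product `A = a₁ ⋯ a_r` of anisotropic vectors acts on `M` as the
composite `σ` of the reflections in the `aᵢ`: `α(A) · ι x = ι (σ x) · A`. Hence
`P_A (ι x) = ι ((x - σ x) / 2)`, and `x - σ x` lies in the span of the `aᵢ`, hence in the span of
the `bⱼ`. When the `bⱼ` are pairwise orthogonal, their composite reflection is `-1` on their span,
so `P_B` fixes `ι y` for every `y` in that span.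
-/

namespace QuadraticForm

variable {K M : Type*} [Field K] [AddCommGroup M] [Module K M]

noncomputable def reflection (Q : QuadraticForm K M) (a : M) : Module.End K M :=
  Module.preReflection a ((Q a)⁻¹ • QuadraticMap.polarBilin Q a)

noncomputable def reflectionList (Q : QuadraticForm K M) (l : List M) : Module.End K M :=
  (l.map (reflection Q)).prod

variable {Q : QuadraticForm K M}

theorem reflection_apply (a x : M) :
    reflection Q a x = x - ((Q a)⁻¹ * QuadraticMap.polar Q a x) • a := by
  simp [reflection, Module.preReflection_apply]

@[simp]
theorem reflectionList_nil : reflectionList Q [] = 1 := rfl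

@[simp]
theorem reflectionList_cons (a : M) (l : List M) :
    reflectionList Q (a :: l) = reflection Q a * reflectionList Q l := by
  simp [reflectionList]

theorem sub_reflectionList_mem_span (l : List M) (x : M) :
    x - reflectionList Q l x ∈ Submodule.span K {m | m ∈ l} := by
  induction l with
  | nil => simp
  | cons a l ih =>
    have hsplit : x - reflectionList Q (a :: l) x
        = (x - reflectionList Q l x)
          + ((Q a)⁻¹ * QuadraticMap.polar Q a (reflectionList Q l x)) • a := by
      rw [reflectionList_cons, Module.End.mul_apply, reflection_apply]; abel
    rw [hsplit]
    refine Submodule.add_mem _ (Submodule.span_mono ?_ ih)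
      (Submodule.smul_mem _ _ (Submodule.subset_span List.mem_cons_self))
    exact fun m hm => List.mem_cons_of_mem a hm

theorem reflectionList_apply_of_polar_eq_zero {l : List M} {y : M}
    (hy : ∀ m ∈ l, QuadraticMap.polar Q m y = 0) : reflectionList Q l y = y := by
  induction l with
  | nil => rfl
  | cons a l ih =>
    rw [reflectionList_cons, Module.End.mul_apply, ih fun m hm => hy m (List.mem_cons_of_mem a hm),
      reflection_apply, hy a List.mem_cons_self, mul_zero, zero_smul, sub_zero]

theorem reflectionList_apply_of_mem {l : List M}
    (hl : l.Pairwise fun u v => QuadraticMap.polar Q u v = 0) (hQ : ∀ m ∈ l, Q m ≠ 0)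
    {c : M} (hc : c ∈ l) : reflectionList Q l c = -c := by
  induction l with
  | nil => simp at hc
  | cons a l ih =>
    rw [List.pairwise_cons] at hl
    rw [reflectionList_cons, Module.End.mul_apply]
    rcases List.mem_cons.1 hc with rfl | hcl
    · rw [reflectionList_apply_of_polar_eq_zero
          fun m hm => QuadraticMap.polar_comm Q _ _ ▸ hl.1 m hm,
        reflection_apply, QuadraticMap.polar_self, two_nsmul, ← two_mul, mul_left_comm,
        inv_mul_cancel₀ (hQ c List.mem_cons_self), mul_one, two_smul]
      abel
    · rw [ih hl.2 (fun m hm => hQ m (List.mem_cons_of_mem a hm)) hcl, reflection_apply,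
        QuadraticMap.polar_neg_right, hl.1 c hcl, neg_zero, mul_zero, zero_smul, sub_zero]

theorem reflectionList_apply_of_mem_span {l : List M}
    (hl : l.Pairwise fun u v => QuadraticMap.polar Q u v = 0) (hQ : ∀ m ∈ l, Q m ≠ 0)
    {y : M} (hy : y ∈ Submodule.span K {m | m ∈ l}) : reflectionList Q l y = -y :=
  LinearMap.eqOn_span' (g := -LinearMap.id) (fun _ hc => reflectionList_apply_of_mem hl hQ hc) hy

end QuadraticForm

section Clifford

open QuadraticForm

variable {K M : Type*} [Field K] [AddCommGroup M] [Module K M] {Q : QuadraticForm K M}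

theorem neg_ι_mul_ι_eq_ι_reflection_mul {a : M} (ha : Q a ≠ 0) (m : M) :
    -(ι Q a * ι Q m) = ι Q (reflection Q a m) * ι Q a := by
  have hscalar : ((Q a)⁻¹ * QuadraticMap.polar Q a m) • algebraMap K (CliffordAlgebra Q) (Q a)
      = algebraMap K (CliffordAlgebra Q) (QuadraticMap.polar Q a m) := by
    rw [Algebra.smul_def, ← map_mul, mul_right_comm, inv_mul_cancel₀ ha, one_mul]
  rw [reflection_apply, map_sub, sub_mul, map_smul, smul_mul_assoc, ι_sq_scalar, hscalar,
    ← ι_mul_ι_add_swap]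
  abel

theorem involute_prod_map_ι_mul_ι {l : List M} (hl : ∀ m ∈ l, Q m ≠ 0) (x : M) :
    involute (l.map (ι Q)).prod * ι Q x = ι Q (reflectionList Q l x) * (l.map (ι Q)).prod := by
  induction l generalizing x with
  | nil => simp
  | cons a l ih =>
    simp only [List.map_cons, List.prod_cons, map_mul, involute_ι, reflectionList_cons,
      Module.End.mul_apply]
    rw [mul_assoc, ih (fun m hm => hl m (List.mem_cons_of_mem a hm)), neg_mul, ← mul_assoc,
      ← neg_mul, neg_ι_mul_ι_eq_ι_reflection_mul (hl a List.mem_cons_self), mul_assoc]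

variable [Invertible (2 : K)]

theorem invProj_ι_of_eq_prod {l : List M} (hl : ∀ m ∈ l, Q m ≠ 0)
    (C : CliffordAlgebra Q) [Invertible C] (hC : C = (l.map (ι Q)).prod) (x : M) :
    invProj C (ι Q x) = ι Q (⅟(2 : K) • (x - reflectionList Q l x)) := by
  subst hC
  rw [invProj, involute_prod_map_ι_mul_ι hl, mul_assoc, mul_invOf_self, mul_one, map_smul, map_sub]

theorem invProj_ι_of_mem_span {l : List M}
    (hp : l.Pairwise fun u v => QuadraticMap.polar Q u v = 0) (hl : ∀ m ∈ l, Q m ≠ 0)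
    (C : CliffordAlgebra Q) [Invertible C] (hC : C = (l.map (ι Q)).prod)
    {y : M} (hy : y ∈ Submodule.span K {m | m ∈ l}) : invProj C (ι Q y) = ι Q y := by
  rw [invProj_ι_of_eq_prod hl C hC, reflectionList_apply_of_mem_span hp hl hy, sub_neg_eq_add,
    ← two_smul K y, smul_smul, invOf_mul_self, one_smul]

end Clifford

theorem invProj_invProj_eq_right_general {K M : Type*} [Field K] [Invertible (2 : K)]
    [AddCommGroup M] [Module K M] {Q : QuadraticForm K M}
    {r s : ℕ} (a : Fin r → M) (b : Fin s → M)
    (A B : CliffordAlgebra Q) [Invertible A] [Invertible B]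
    (hA : A = (List.ofFn fun i => ι Q (a i)).prod)
    (hB : B = (List.ofFn fun j => ι Q (b j)).prod)
    (hb : ∀ i j, i ≠ j → QuadraticMap.polar Q (b i) (b j) = 0)
    (haQ : ∀ i, Q (a i) ≠ 0) (hbQ : ∀ j, Q (b j) ≠ 0)
    (hspan : Submodule.span K (Set.range a) ≤ Submodule.span K (Set.range b))
    (x : M) :
    invProj B (invProj A (ι Q x)) = invProj A (ι Q x) := by
  have mem_ofFn {n : ℕ} (f : Fin n → M) : {m | m ∈ List.ofFn f} = Set.range f := by
    ext; simp
  have anisotropic {n : ℕ} (f : Fin n → M) (hf : ∀ i, Q (f i) ≠ 0) :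
      ∀ m ∈ List.ofFn f, Q m ≠ 0 := by
    simpa using hf
  have prod_ofFn {n : ℕ} (f : Fin n → M) :
      (List.ofFn fun i => ι Q (f i)).prod = ((List.ofFn f).map (ι Q)).prod := by
    rw [List.map_ofFn]; rfl
  rw [invProj_ι_of_eq_prod (anisotropic a haQ) A (hA.trans (prod_ofFn a))]
  refine invProj_ι_of_mem_span (List.pairwise_ofFn.2 fun i j hij => hb i j hij.ne)
    (anisotropic b hbQ) B (hB.trans (prod_ofFn b)) ?_
  rw [mem_ofFn]
  refine hspan (Submodule.smul_mem _ _ ?_)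
  simpa only [mem_ofFn] using QuadraticForm.sub_reflectionList_mem_span (List.ofFn a) x

/-- If the span of the blade `A` is contained in that of the blade `B` (so `A·B = A ⌟ B`), then `P_B(P_A(x)) = P_A(x)` for every vector `x`. -/
theorem invProj_invProj_eq_right {K M : Type*} [Field K] [Invertible (2 : K)]
    [AddCommGroup M] [Module K M] {Q : QuadraticForm K M}
    {r s : ℕ} (a : Fin r → M) (b : Fin s → M)
    (A B : CliffordAlgebra Q) [Invertible A] [Invertible B]
    (hA : A = (List.ofFn fun i => ι Q (a i)).prod)
    (hB : B = (List.ofFn fun j => ι Q (b j)).prod)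
    (ha : ∀ i j, i ≠ j → QuadraticMap.polar Q (a i) (a j) = 0)
    (hb : ∀ i j, i ≠ j → QuadraticMap.polar Q (b i) (b j) = 0)
    (haQ : ∀ i, Q (a i) ≠ 0) (hbQ : ∀ j, Q (b j) ≠ 0)
    (hspan : Submodule.span K (Set.range a) ≤ Submodule.span K (Set.range b))
    (x : M) :
    invProj B (invProj A (ι Q x)) = invProj A (ι Q x) :=
  invProj_invProj_eq_right_general a b A B hA hB hb haQ hbQ hspan x
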